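/- arXiv:1701.01307 — 6 statements merged into one kernel-verified Lean document; each statement's English description precedes it below -/
import Mathlib

section
/- For any sequence (ℓ_s)_{s∈ℤ} of real numbers, let J = {(n + ℓ_s, s) : n, s ∈ ℤ} ⊆ ℝ². Then the translates {T_ε + t : t ∈ J} tile ℝ²; that is, ⋃_{t∈J} (T_ε + t) = ℝ², and for any two distinct t, t' ∈ J the intersection (T_ε + t) ∩ (T_ε + t') has two-dimensional Lebesgue measure zero. In particular T_ε is a self-similar tile. -/
/-!
With `|p| = 2m + 1`, every `y ∈ [-1/2, 1/2]` is `∑ d_k p^-(k+1)` for digits `d_k ∈ [-m, m]`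
(greedy algorithm), every such series lies in `[-1/2, 1/2]`, and two different digit sequences
can have the same value only if `p^(k+1) y ∈ ℤ + 1/2` for some `k`, a countable set of `y`.

So the height `y` of a point of `T_ε + (n + ℓ_s, s)` determines `s` unless `y ∈ ℤ + 1/2`, and
then the digits `j` of `y - s` outside a countable set. These fix the horizontal offset
`∑ b_{j_k} p^-(k+1)` of the row, a measurable function of `y`, and the first coordinate then
determines `n` off countably many translates of its graph; all the exceptional sets are null.
Rounding `y`, and then the first coordinate minus the offset, covers the plane.
-/

noncomputable section

/-- `b_j = ε` if `j` is odd and `b_j = 0` if `j` is even. -/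
def bshift (ε : ℝ) (j : ℤ) : ℝ := if Odd j then ε else 0

/-- The self-similar set `T_ε` associated with `p` (with `|p| = 2m+1`) and the shift `ε`. -/
def Tset (p : ℤ) (m : ℕ) (ε : ℝ) : Set (ℝ × ℝ) :=
  { z | ∃ i j : ℕ → ℤ, (∀ k, |i k| ≤ (m : ℤ)) ∧ (∀ k, |j k| ≤ (m : ℤ)) ∧
      z.1 = ∑' k : ℕ, ((p : ℝ) ^ (k + 1))⁻¹ * ((i k : ℝ) + bshift ε (j k)) ∧
      z.2 = ∑' k : ℕ, ((p : ℝ) ^ (k + 1))⁻¹ * (j k : ℝ) }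

open MeasureTheory

namespace SelfSimilarTile

def ofDigits (q : ℝ) (c : ℕ → ℝ) : ℝ := ∑' k, (q ^ (k + 1))⁻¹ * c k

section RealBase

variable {q : ℝ} {c d : ℕ → ℝ} {M : ℝ}

lemma norm_inv_pow_mul_le (hc : ∀ k, |c k| ≤ M) (k : ℕ) :
    ‖(q ^ (k + 1))⁻¹ * c k‖ ≤ M * |q|⁻¹ * |q|⁻¹ ^ k := by
  have hqk : 0 ≤ |q|⁻¹ ^ k * |q|⁻¹ := by positivity
  rw [Real.norm_eq_abs, abs_mul, abs_inv, abs_pow, pow_succ, mul_inv, ← inv_pow]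
  nlinarith [hc k]

lemma summable_ofDigits (hq : 1 < |q|) (hc : ∀ k, |c k| ≤ M) :
    Summable fun k => (q ^ (k + 1))⁻¹ * c k :=
  .of_norm_bounded ((summable_geometric_of_lt_one (by positivity)
    (inv_lt_one_of_one_lt₀ hq)).mul_left _) (norm_inv_pow_mul_le hc)

lemma abs_ofDigits_le (hq : 1 < |q|) (hc : ∀ k, |c k| ≤ M) :
    |ofDigits q c| ≤ M / (|q| - 1) := by
  have hgeom := (hasSum_geometric_of_lt_one (by positivity)
    (inv_lt_one_of_one_lt₀ hq)).mul_left (M * |q|⁻¹)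
  have hq0 : |q| ≠ 0 := by positivity
  have hq1 : |q| - 1 ≠ 0 := by linarith
  have hbound := tsum_of_norm_bounded hgeom (norm_inv_pow_mul_le hc)
  rw [Real.norm_eq_abs] at hbound
  refine hbound.trans_eq ?_
  field_simp

lemma ofDigits_add (hc : Summable fun k => (q ^ (k + 1))⁻¹ * c k)
    (hd : Summable fun k => (q ^ (k + 1))⁻¹ * d k) :
    ofDigits q (fun k => c k + d k) = ofDigits q c + ofDigits q d := by
  simp only [ofDigits, mul_add]
  exact hc.tsum_add hd

lemma mul_ofDigits (hq : q ≠ 0) (hc : Summable fun k => (q ^ (k + 1))⁻¹ * c k) :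
    q * ofDigits q c = c 0 + ofDigits q (fun k => c (k + 1)) := by
  rw [ofDigits, hc.tsum_eq_zero_add, mul_add, ofDigits, ← tsum_mul_left]
  congr 1
  · rw [zero_add, pow_one, mul_inv_cancel_left₀ hq]
  · refine tsum_congr fun k => ?_
    rw [pow_succ _ (k + 1)]
    field_simp

end RealBase

section BalancedBase

variable {p : ℤ} {m : ℕ}

lemma abs_intCast_eq_of_abs_eq (hp : |p| = 2 * m + 1) : |(p : ℝ)| = 2 * m + 1 := by
  rw [← Int.cast_abs, hp]
  push_cast
  ring

lemma intCast_ne_zero_of_abs_eq (hp : |p| = 2 * m + 1) : (p : ℝ) ≠ 0 := by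
  rw [← abs_ne_zero, abs_intCast_eq_of_abs_eq hp]
  positivity

lemma one_lt_abs_intCast_of_abs_eq (hm : 1 ≤ m) (hp : |p| = 2 * m + 1) : 1 < |(p : ℝ)| := by
  rw [abs_intCast_eq_of_abs_eq hp]
  have : (1 : ℝ) ≤ m := by exact_mod_cast hm
  linarith

lemma summable_ofDigits_intCast (hm : 1 ≤ m) (hp : |p| = 2 * m + 1) {j : ℕ → ℤ}
    (hj : ∀ k, |j k| ≤ m) : Summable fun k => ((p : ℝ) ^ (k + 1))⁻¹ * (j k : ℝ) :=
  summable_ofDigits (one_lt_abs_intCast_of_abs_eq hm hp) (M := m) fun k => by exact_mod_cast hj k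

lemma abs_ofDigits_intCast_le_half (hm : 1 ≤ m) (hp : |p| = 2 * m + 1) {j : ℕ → ℤ}
    (hj : ∀ k, |j k| ≤ m) : |ofDigits p (fun k => (j k : ℝ))| ≤ 1 / 2 := by
  have hm' : (1 : ℝ) ≤ m := by exact_mod_cast hm
  calc |ofDigits p (fun k => (j k : ℝ))| ≤ m / (|(p : ℝ)| - 1) :=
        abs_ofDigits_le (one_lt_abs_intCast_of_abs_eq hm hp) fun k => by exact_mod_cast hj k
    _ = 1 / 2 := by
        rw [abs_intCast_eq_of_abs_eq hp]
        field_simp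
        ring

lemma abs_mul_le_of_abs_le_half (hp : |p| = 2 * m + 1) {r : ℝ} (hr : |r| ≤ 1 / 2) :
    |(p : ℝ) * r| ≤ m + 1 / 2 := by
  rw [abs_mul, abs_intCast_eq_of_abs_eq hp]
  nlinarith [abs_nonneg r]

-- The cap at `m` only acts when `p r = m + 1/2`, which `round` sends up to `m + 1`.
def greedyDigit (p : ℤ) (m : ℕ) (r : ℝ) : ℤ := min (m : ℤ) (round ((p : ℝ) * r))

def greedyStep (p : ℤ) (m : ℕ) (r : ℝ) : ℝ := p * r - greedyDigit p m r

def greedyRem (p : ℤ) (m : ℕ) (y : ℝ) (k : ℕ) : ℝ := (greedyStep p m)^[k] y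

def greedyDigits (p : ℤ) (m : ℕ) (y : ℝ) (k : ℕ) : ℤ := greedyDigit p m (greedyRem p m y k)

lemma abs_greedyDigit_le (hp : |p| = 2 * m + 1) {r : ℝ} (hr : |r| ≤ 1 / 2) :
    |greedyDigit p m r| ≤ m := by
  have hlow := sub_half_lt_round ((p : ℝ) * r)
  have hpr := (abs_le.1 (abs_mul_le_of_abs_le_half hp hr)).1
  have : -(m : ℤ) - 1 < round ((p : ℝ) * r) := by
    exact_mod_cast (by push_cast; linarith : (-(m : ℤ) - 1 : ℝ) < round ((p : ℝ) * r))
  rw [greedyDigit, abs_le]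
  omega

lemma abs_greedyStep_le (hp : |p| = 2 * m + 1) {r : ℝ} (hr : |r| ≤ 1 / 2) :
    |greedyStep p m r| ≤ 1 / 2 := by
  have hlow := sub_half_lt_round ((p : ℝ) * r)
  have hup := round_le_add_half ((p : ℝ) * r)
  have hpr := (abs_le.1 (abs_mul_le_of_abs_le_half hp hr)).2
  rw [greedyStep, greedyDigit, abs_le]
  rcases min_cases (m : ℤ) (round ((p : ℝ) * r)) with ⟨hmin, hround⟩ | ⟨hmin, -⟩
  · have : (m : ℝ) ≤ round ((p : ℝ) * r) := by exact_mod_cast hround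
    rw [hmin]
    push_cast
    constructor <;> linarith
  · rw [hmin]
    constructor <;> linarith

lemma greedyRem_succ (y : ℝ) (k : ℕ) :
    greedyRem p m y (k + 1) = p * greedyRem p m y k - greedyDigits p m y k :=
  Function.iterate_succ_apply' _ _ _

lemma abs_greedyRem_le (hp : |p| = 2 * m + 1) {y : ℝ} (hy : |y| ≤ 1 / 2) (k : ℕ) :
    |greedyRem p m y k| ≤ 1 / 2 := by
  induction k with
  | zero => exact hy
  | succ k ih => exact greedyRem_succ (p := p) (m := m) y k ▸ abs_greedyStep_le hp ih

lemma abs_greedyDigits_le (hp : |p| = 2 * m + 1) {y : ℝ} (hy : |y| ≤ 1 / 2) (k : ℕ) :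
    |greedyDigits p m y k| ≤ m :=
  abs_greedyDigit_le hp (abs_greedyRem_le hp hy k)

lemma sum_range_greedyDigits (hp : |p| = 2 * m + 1) (y : ℝ) (n : ℕ) :
    ∑ k ∈ Finset.range n, ((p : ℝ) ^ (k + 1))⁻¹ * (greedyDigits p m y k : ℝ)
      = y - ((p : ℝ) ^ n)⁻¹ * greedyRem p m y n := by
  have hp0 := intCast_ne_zero_of_abs_eq hp
  induction n with
  | zero => simp [greedyRem]
  | succ n ih =>
    rw [Finset.sum_range_succ, ih, greedyRem_succ, pow_succ]
    field_simp
    ring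

lemma ofDigits_greedyDigits (hm : 1 ≤ m) (hp : |p| = 2 * m + 1) {y : ℝ} (hy : |y| ≤ 1 / 2) :
    ofDigits p (fun k => (greedyDigits p m y k : ℝ)) = y := by
  have hq := one_lt_abs_intCast_of_abs_eq hm hp
  have hrem : Filter.Tendsto (fun n => ((p : ℝ) ^ n)⁻¹ * greedyRem p m y n)
      Filter.atTop (nhds 0) := by
    refine squeeze_zero_norm (fun n => ?_) (tendsto_pow_atTop_nhds_zero_of_lt_one
      (by positivity) (inv_lt_one_of_one_lt₀ hq))
    have := abs_greedyRem_le hp hy n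
    have : 0 ≤ |(p : ℝ)|⁻¹ ^ n := by positivity
    rw [Real.norm_eq_abs, abs_mul, abs_inv, abs_pow, ← inv_pow]
    nlinarith
  have hpartial := (summable_ofDigits_intCast hm hp
    (abs_greedyDigits_le hp hy)).hasSum.tendsto_sum_nat
  simp only [sum_range_greedyDigits hp] at hpartial
  exact tendsto_nhds_unique hpartial (by simpa using tendsto_const_nhds.sub hrem)

lemma measurable_greedyDigits (k : ℕ) : Measurable fun y => greedyDigits p m y k := by
  have hround : Measurable (round : ℝ → ℤ) := by
    simp only [funext round_eq]
    exact Int.measurable_floor.comp (measurable_id.add_const _)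
  have hdigit : Measurable (greedyDigit p m) :=
    measurable_const.min (hround.comp (measurable_const.mul measurable_id))
  have hstep : Measurable (greedyStep p m) :=
    (measurable_const.mul measurable_id).sub (measurable_from_top.comp hdigit)
  exact hdigit.comp (hstep.iterate k)

end BalancedBase

section Ambiguity

def halfIntegers : Set ℝ := Set.range fun z : ℤ => (z : ℝ) + 1 / 2

lemma countable_halfIntegers : halfIntegers.Countable := Set.countable_range _

lemma intCast_add_mem_halfIntegers (z : ℤ) {x : ℝ} (hx : x ∈ halfIntegers) :
    z + x ∈ halfIntegers := by
  obtain ⟨w, rfl⟩ := hx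
  exact ⟨z + w, by push_cast; ring⟩

/-- Two points of `[-1/2, 1/2]` can differ by a nonzero integer only if they are `∓1/2`. -/
lemma intCast_add_mem_halfIntegers_of_add_eq_add {s s' : ℤ} (hs : s ≠ s') {Y Y' : ℝ}
    (hY : |Y| ≤ 1 / 2) (hY' : |Y'| ≤ 1 / 2) (h : s + Y = s' + Y') :
    s + Y ∈ halfIntegers := by
  rw [abs_le] at hY hY'
  rcases hs.lt_or_gt with hlt | hlt
  · have : (s : ℝ) + 1 ≤ s' := by exact_mod_cast hlt
    exact ⟨s, by linarith⟩
  · have : (s' : ℝ) + 1 ≤ s := by exact_mod_cast hlt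
    exact ⟨s', by linarith⟩

-- Contains every number with two different expansions in base `p` with digits in `[-m, m]`.
def ambiguousSet (p : ℤ) : Set ℝ :=
  ⋃ k : ℕ, (fun y => (p : ℝ) ^ (k + 1) * y) ⁻¹' halfIntegers

variable {p : ℤ} {m : ℕ}

lemma countable_ambiguousSet (hp : (p : ℝ) ≠ 0) : (ambiguousSet p).Countable :=
  Set.countable_iUnion fun _ =>
    countable_halfIntegers.preimage (mul_right_injective₀ (pow_ne_zero _ hp))

lemma mem_ambiguousSet_of_mul_sub_mem (y : ℝ) (a : ℤ) (h : p * y - a ∈ ambiguousSet p) :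
    y ∈ ambiguousSet p := by
  obtain ⟨k, hk⟩ := Set.mem_iUnion.1 h
  refine Set.mem_iUnion.2 ⟨k + 1, ?_⟩
  have := intCast_add_mem_halfIntegers (p ^ (k + 1) * a) hk
  simp only [Set.mem_preimage] at this ⊢
  convert this using 1
  push_cast
  ring

lemma intCast_mul_ofDigits (hm : 1 ≤ m) (hp : |p| = 2 * m + 1) {j : ℕ → ℤ}
    (hj : ∀ k, |j k| ≤ m) :
    p * ofDigits p (fun k => (j k : ℝ)) = j 0 + ofDigits p (fun k => (j (k + 1) : ℝ)) :=
  mul_ofDigits (intCast_ne_zero_of_abs_eq hp) (summable_ofDigits_intCast hm hp hj)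

lemma head_eq_of_ofDigits_eq (hm : 1 ≤ m) (hp : |p| = 2 * m + 1) {j j' : ℕ → ℤ}
    (hj : ∀ k, |j k| ≤ m) (hj' : ∀ k, |j' k| ≤ m)
    (h : ofDigits p (fun k => (j k : ℝ)) = ofDigits p (fun k => (j' k : ℝ)))
    (hamb : ofDigits p (fun k => (j k : ℝ)) ∉ ambiguousSet p) : j 0 = j' 0 := by
  by_contra hne
  refine hamb (Set.mem_iUnion.2 ⟨0, ?_⟩)
  simp only [Set.mem_preimage, zero_add, pow_one]
  rw [intCast_mul_ofDigits hm hp hj]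
  refine intCast_add_mem_halfIntegers_of_add_eq_add hne
    (abs_ofDigits_intCast_le_half hm hp fun k => hj (k + 1))
    (abs_ofDigits_intCast_le_half hm hp fun k => hj' (k + 1)) ?_
  rw [← intCast_mul_ofDigits hm hp hj, ← intCast_mul_ofDigits hm hp hj', h]

lemma eq_of_ofDigits_eq (hm : 1 ≤ m) (hp : |p| = 2 * m + 1) {j j' : ℕ → ℤ}
    (hj : ∀ k, |j k| ≤ m) (hj' : ∀ k, |j' k| ≤ m)
    (h : ofDigits p (fun k => (j k : ℝ)) = ofDigits p (fun k => (j' k : ℝ)))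
    (hamb : ofDigits p (fun k => (j k : ℝ)) ∉ ambiguousSet p) : j = j' := by
  funext k
  induction k generalizing j j' with
  | zero => exact head_eq_of_ofDigits_eq hm hp hj hj' h hamb
  | succ k ih =>
    have htail : ofDigits p (fun k => (j (k + 1) : ℝ))
        = p * ofDigits p (fun k => (j k : ℝ)) - j 0 := by
      rw [intCast_mul_ofDigits hm hp hj]
      ring
    have htail' : ofDigits p (fun k => (j' (k + 1) : ℝ))
        = p * ofDigits p (fun k => (j k : ℝ)) - j 0 := by
      rw [h, head_eq_of_ofDigits_eq hm hp hj hj' h hamb, intCast_mul_ofDigits hm hp hj']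
      ring
    refine ih (fun k => hj (k + 1)) (fun k => hj' (k + 1)) (htail.trans htail'.symm) ?_
    rw [htail]
    exact fun hmem => hamb (mem_ambiguousSet_of_mul_sub_mem _ _ hmem)

end Ambiguity

section PlaneNullSets

lemma volume_univ_prod_null {A : Set ℝ} (hA : volume A = 0) :
    volume (Set.univ ×ˢ A : Set (ℝ × ℝ)) = 0 := by
  rw [Measure.volume_eq_prod, Measure.prod_prod, hA, mul_zero]

lemma volume_setOf_fst_sub_mem_null {g : ℝ → ℝ} (hg : Measurable g) {H : Set ℝ}
    (hHm : MeasurableSet H) (hH : volume H = 0) :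
    volume {z : ℝ × ℝ | z.1 - g z.2 ∈ H} = 0 := by
  have hmeas : MeasurableSet {z : ℝ × ℝ | z.1 - g z.2 ∈ H} :=
    (measurable_fst.sub (hg.comp measurable_snd)) hHm
  have hfibre : ∀ y, volume ((fun x => (x, y)) ⁻¹' {z : ℝ × ℝ | z.1 - g z.2 ∈ H}) = 0 := by
    intro y
    change volume ((fun x => x + -g y) ⁻¹' H) = 0
    rw [measure_preimage_add_right, hH]
  rw [Measure.volume_eq_prod, Measure.prod_apply_symm hmeas, funext hfibre, lintegral_zero]

end PlaneNullSets

section Tile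

variable {p : ℤ} {m : ℕ}

lemma abs_bshift_le (ε : ℝ) (j : ℤ) : |bshift ε j| ≤ |ε| := by
  unfold bshift
  split_ifs <;> simp

lemma summable_ofDigits_bshift (hm : 1 ≤ m) (hp : |p| = 2 * m + 1) (ε : ℝ) (j : ℕ → ℤ) :
    Summable fun k => ((p : ℝ) ^ (k + 1))⁻¹ * bshift ε (j k) :=
  summable_ofDigits (one_lt_abs_intCast_of_abs_eq hm hp) fun k => abs_bshift_le ε (j k)

-- Off `ambiguousSet p`, the row of `Tset p m ε` at height `y` is `[-1/2, 1/2]` shifted by this.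
def fibreShift (p : ℤ) (m : ℕ) (ε y : ℝ) : ℝ :=
  ofDigits p (fun k => bshift ε (greedyDigits p m y k))

lemma measurable_fibreShift (hm : 1 ≤ m) (hp : |p| = 2 * m + 1) (ε : ℝ) :
    Measurable (fibreShift p m ε) := by
  refine measurable_of_tendsto_metrizable (fun n => ?_) (tendsto_pi_nhds.2 fun y =>
    (summable_ofDigits_bshift hm hp ε (greedyDigits p m y)).hasSum.tendsto_sum_nat)
  exact Finset.measurable_sum _ fun k _ =>
    ((measurable_from_top (f := bshift ε)).comp (measurable_greedyDigits k)).const_mul _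

lemma fibreShift_ofDigits (hm : 1 ≤ m) (hp : |p| = 2 * m + 1) (ε : ℝ) {j : ℕ → ℤ}
    (hj : ∀ k, |j k| ≤ m) (hamb : ofDigits p (fun k => (j k : ℝ)) ∉ ambiguousSet p) :
    fibreShift p m ε (ofDigits p (fun k => (j k : ℝ))) = ofDigits p (fun k => bshift ε (j k)) := by
  have hy := abs_ofDigits_intCast_le_half hm hp hj
  have hgreedy := eq_of_ofDigits_eq hm hp hj (abs_greedyDigits_le hp hy)
    (ofDigits_greedyDigits hm hp hy).symm hamb
  rw [fibreShift, ← hgreedy]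

lemma mem_Tset_iff {ε : ℝ} {z : ℝ × ℝ} :
    z ∈ Tset p m ε ↔ ∃ i j : ℕ → ℤ, (∀ k, |i k| ≤ m) ∧ (∀ k, |j k| ≤ m) ∧
      z.1 = ofDigits p (fun k => (i k : ℝ) + bshift ε (j k)) ∧
      z.2 = ofDigits p (fun k => (j k : ℝ)) :=
  Iff.rfl

lemma mem_image_add_Tset_iff (hm : 1 ≤ m) (hp : |p| = 2 * m + 1) {ε : ℝ} {t z : ℝ × ℝ} :
    z ∈ (· + t) '' Tset p m ε ↔ ∃ i j : ℕ → ℤ, (∀ k, |i k| ≤ m) ∧ (∀ k, |j k| ≤ m) ∧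
      z.1 = ofDigits p (fun k => (i k : ℝ)) + ofDigits p (fun k => bshift ε (j k)) + t.1 ∧
      z.2 = ofDigits p (fun k => (j k : ℝ)) + t.2 := by
  rw [Set.image_add_right, Set.mem_preimage, mem_Tset_iff]
  refine exists₂_congr fun i j => and_congr_right fun hi => and_congr_right fun _ => ?_
  rw [ofDigits_add (summable_ofDigits_intCast hm hp hi) (summable_ofDigits_bshift hm hp ε j),
    Prod.fst_add, Prod.snd_add, Prod.fst_neg, Prod.snd_neg, ← sub_eq_add_neg,
    ← sub_eq_add_neg, sub_eq_iff_eq_add, sub_eq_iff_eq_add]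

lemma exists_mem_image_add_Tset (hm : 1 ≤ m) (hp : |p| = 2 * m + 1) (ε : ℝ) (ℓ : ℤ → ℝ)
    (z : ℝ × ℝ) : ∃ n s : ℤ, z ∈ (· + ((n : ℝ) + ℓ s, (s : ℝ))) '' Tset p m ε := by
  obtain ⟨x, y⟩ := z
  set s := round y
  set C := fibreShift p m ε (y - s)
  set n := round (x - ℓ s - C)
  refine ⟨n, s, (mem_image_add_Tset_iff hm hp).2 ⟨greedyDigits p m (x - ℓ s - C - n),
    greedyDigits p m (y - s), abs_greedyDigits_le hp (abs_sub_round _),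
    abs_greedyDigits_le hp (abs_sub_round _), ?_, ?_⟩⟩
  · rw [ofDigits_greedyDigits hm hp (abs_sub_round _)]
    change x = x - ℓ s - C - n + C + (n + ℓ s)
    ring
  · rw [ofDigits_greedyDigits hm hp (abs_sub_round _)]
    change y = y - s + s
    ring

lemma image_add_Tset_inter_subset_of_ne (hm : 1 ≤ m) (hp : |p| = 2 * m + 1) {ε a a' : ℝ}
    {s s' : ℤ} (hs : s ≠ s') :
    (· + (a, (s : ℝ))) '' Tset p m ε ∩ (· + (a', (s' : ℝ))) '' Tset p m ε
      ⊆ Set.univ ×ˢ halfIntegers := by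
  rintro z ⟨hz, hz'⟩
  obtain ⟨-, j, -, hj, -, hz2⟩ := (mem_image_add_Tset_iff hm hp).1 hz
  obtain ⟨-, j', -, hj', -, hz2'⟩ := (mem_image_add_Tset_iff hm hp).1 hz'
  refine ⟨trivial, ?_⟩
  have := intCast_add_mem_halfIntegers_of_add_eq_add hs
    (abs_ofDigits_intCast_le_half hm hp hj) (abs_ofDigits_intCast_le_half hm hp hj')
    (by linarith)
  rwa [hz2, add_comm]

lemma image_add_Tset_inter_subset_of_ne_intCast (hm : 1 ≤ m) (hp : |p| = 2 * m + 1)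
    {ε a b : ℝ} {n n' : ℤ} (hn : n ≠ n') :
    (· + ((n : ℝ) + a, b)) '' Tset p m ε ∩ (· + ((n' : ℝ) + a, b)) '' Tset p m ε
      ⊆ Set.univ ×ˢ ((· - b) ⁻¹' ambiguousSet p)
        ∪ {z | z.1 - (a + fibreShift p m ε (z.2 - b)) ∈ halfIntegers} := by
  rintro z ⟨hz, hz'⟩
  obtain ⟨i, j, hi, hj, hz1, hz2⟩ := (mem_image_add_Tset_iff hm hp).1 hz
  obtain ⟨i', j', hi', hj', hz1', hz2'⟩ := (mem_image_add_Tset_iff hm hp).1 hz'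
  by_cases hamb : z.2 - b ∈ ambiguousSet p
  · exact Or.inl ⟨trivial, hamb⟩
  right
  have hy : z.2 - b = ofDigits p (fun k => (j k : ℝ)) := by rw [hz2]; ring
  have hy' : z.2 - b = ofDigits p (fun k => (j' k : ℝ)) := by rw [hz2']; ring
  have hC : fibreShift p m ε (z.2 - b) = ofDigits p (fun k => bshift ε (j k)) := by
    rw [hy]; exact fibreShift_ofDigits hm hp ε hj (hy ▸ hamb)
  have hC' : fibreShift p m ε (z.2 - b) = ofDigits p (fun k => bshift ε (j' k)) := by
    rw [hy']; exact fibreShift_ofDigits hm hp ε hj' (hy' ▸ hamb)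
  have := intCast_add_mem_halfIntegers_of_add_eq_add hn
    (abs_ofDigits_intCast_le_half hm hp hi) (abs_ofDigits_intCast_le_half hm hp hi')
    (by linarith)
  change z.1 - (a + fibreShift p m ε (z.2 - b)) ∈ halfIntegers
  convert this using 1
  rw [hz1, hC]
  ring

end Tile

end SelfSimilarTile

open SelfSimilarTile in
/-- for any sequence `(ℓ_s)_{s ∈ ℤ}`, the family of translates of `T_ε` by
`J = {(n + ℓ_s, s) : n, s ∈ ℤ}` covers `ℝ²` and has pairwise intersections of Lebesgue
measure zero; i.e. `T_ε + J` is a tiling and `T_ε` is a self-similar tile. -/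
theorem stmt0 (p : ℤ) (m : ℕ) (hm : 1 ≤ m) (hp : |p| = 2 * (m : ℤ) + 1) (ε : ℝ)
    (ℓ : ℤ → ℝ) :
    (⋃ t ∈ {t : ℝ × ℝ | ∃ n s : ℤ, t = ((n : ℝ) + ℓ s, (s : ℝ))},
        (· + t) '' Tset p m ε) = Set.univ ∧
    ∀ t ∈ {t : ℝ × ℝ | ∃ n s : ℤ, t = ((n : ℝ) + ℓ s, (s : ℝ))},
      ∀ t' ∈ {t : ℝ × ℝ | ∃ n s : ℤ, t = ((n : ℝ) + ℓ s, (s : ℝ))}, t ≠ t' →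
        MeasureTheory.volume
          (((· + t) '' Tset p m ε) ∩ ((· + t') '' Tset p m ε)) = 0 := by
  refine ⟨Set.eq_univ_of_forall fun z => ?_, ?_⟩
  · obtain ⟨n, s, hz⟩ := exists_mem_image_add_Tset hm hp ε ℓ z
    exact Set.mem_biUnion ⟨n, s, rfl⟩ hz
  rintro _ ⟨n, s, rfl⟩ _ ⟨n', s', rfl⟩ hne
  rcases eq_or_ne s s' with rfl | hs
  · have hn : n ≠ n' := by
      rintro rfl
      exact hne rfl
    refine measure_mono_null (image_add_Tset_inter_subset_of_ne_intCast hm hp hn)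
      (measure_union_null (volume_univ_prod_null ?_) ?_)
    · exact ((countable_ambiguousSet (intCast_ne_zero_of_abs_eq hp)).preimage
        sub_left_injective).measure_zero _
    · exact volume_setOf_fst_sub_mem_null
        (measurable_const.add ((measurable_fibreShift hm hp ε).comp (measurable_id.sub_const _)))
        countable_halfIntegers.measurableSet (countable_halfIntegers.measure_zero _)
  · exact measure_mono_null (image_add_Tset_inter_subset_of_ne hm hp hs)
      (volume_univ_prod_null (countable_halfIntegers.measure_zero _))
end
end

section
/- Let n ≥ 1, let j₁, …, j_n ∈ {−m, …, m} and let k, ℓ ∈ {−m, …, m}. If |k − ℓ| ≥ 2, then G_{j₁⋯j_n k} ∩ G_{j₁⋯j_n ℓ} = ∅. -/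
noncomputable section

/-- The map `f_{i,j}(x, y) = ((x + i + b_j)/p, (y + j)/p)`. -/
def fmap (p : ℤ) (ε : ℝ) (i j : ℤ) (z : ℝ × ℝ) : ℝ × ℝ :=
  ((z.1 + (i : ℝ) + bshift ε j) / (p : ℝ), (z.2 + (j : ℝ)) / (p : ℝ))

/-- For a word `j₁ ⋯ j_n` (a list of integers in `{-m, …, m}`),
`G_{j₁⋯j_n} = ⋃_{i₁,…,i_n ∈ {-m,…,m}} f_{i₁,j₁} ∘ ⋯ ∘ f_{i_n,j_n}(T_ε)`. -/
def Gset (p : ℤ) (m : ℕ) (ε : ℝ) : List ℤ → Set (ℝ × ℝ)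
  | [] => Tset p m ε
  | j :: w => ⋃ i ∈ Finset.Icc (-(m : ℤ)) (m : ℤ), fmap p ε i j '' Gset p m ε w

/-- The integer encoding the word's contribution to the second coordinate. -/
def cword (p : ℤ) : List ℤ → ℤ
  | [] => 0
  | j :: w => cword p w + j * p ^ w.length

lemma cword_append_single (p : ℤ) (w : List ℤ) (k : ℤ) :
    cword p (w ++ [k]) = cword p w * p + k := by
  induction w with
  | nil => simp [cword]
  | cons j w ih =>
      have hap : w.append [k] = w ++ [k] := rfl
      simp only [List.cons_append, cword, hap, ih, List.length_append, List.length_cons,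
        List.length_nil]
      ring

lemma Tset_snd_bound (m : ℕ) (hm : 1 ≤ m) (p : ℤ) (hp : p = 2 * (m : ℤ) + 1) (ε : ℝ)
    {z : ℝ × ℝ} (hz : z ∈ Tset p m ε) : |z.2| ≤ 1 / 2 := by
  obtain ⟨i, j, hi, hj, hx, hy⟩ := hz
  have hpr : (p : ℝ) = 2 * m + 1 := by exact_mod_cast congrArg (Int.cast : ℤ → ℝ) hp
  have hm1 : (1 : ℝ) ≤ m := by exact_mod_cast hm
  have hp1 : (1 : ℝ) < p := by rw [hpr]; linarith
  set r : ℝ := ((p : ℝ))⁻¹ with hr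
  have hr0 : 0 < r := by positivity
  have hr1 : r < 1 := by
    rw [hr, inv_lt_one_iff₀]; right; exact hp1
  have hsum : Summable (fun k : ℕ => ((m : ℝ) * r) * r ^ k) :=
    (summable_geometric_of_lt_one hr0.le hr1).mul_left _
  have hbound : ∀ k : ℕ, ‖((p : ℝ) ^ (k + 1))⁻¹ * (j k : ℝ)‖ ≤ ((m : ℝ) * r) * r ^ k := by
    intro k
    have h1 : ((p : ℝ) ^ (k + 1))⁻¹ = r ^ (k + 1) := by rw [hr, inv_pow]
    have h2 : |(j k : ℝ)| ≤ (m : ℝ) := by exact_mod_cast hj k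
    rw [Real.norm_eq_abs, abs_mul, h1, abs_of_nonneg (pow_nonneg hr0.le _)]
    calc r ^ (k + 1) * |(j k : ℝ)| ≤ r ^ (k + 1) * m := by
          exact mul_le_mul_of_nonneg_left h2 (pow_nonneg hr0.le _)
      _ = ((m : ℝ) * r) * r ^ k := by ring
  have habs : |z.2| ≤ ∑' k : ℕ, ((m : ℝ) * r) * r ^ k := by
    rw [hy]
    calc ‖∑' k : ℕ, ((p : ℝ) ^ (k + 1))⁻¹ * (j k : ℝ)‖
        ≤ ∑' k : ℕ, ‖((p : ℝ) ^ (k + 1))⁻¹ * (j k : ℝ)‖ := by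
          apply norm_tsum_le_tsum_norm
          exact hsum.of_nonneg_of_le (fun k => norm_nonneg _) hbound
      _ ≤ ∑' k : ℕ, ((m : ℝ) * r) * r ^ k :=
          Summable.tsum_le_tsum hbound (hsum.of_nonneg_of_le (fun k => norm_nonneg _) hbound) hsum
  have hgeo : ∑' k : ℕ, ((m : ℝ) * r) * r ^ k = ((m : ℝ) * r) * (1 - r)⁻¹ := by
    rw [tsum_mul_left, tsum_geometric_of_lt_one hr0.le hr1]
  have hval : ((m : ℝ) * r) * (1 - r)⁻¹ = 1 / 2 := by
    have hpne : (p : ℝ) ≠ 0 := by linarith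
    have h1r : 1 - r = 2 * m / p := by
      rw [hr]; field_simp; linarith
    rw [hr, h1r]
    have hmne : (m : ℝ) ≠ 0 := by linarith
    field_simp
  calc |z.2| ≤ ∑' k : ℕ, ((m : ℝ) * r) * r ^ k := habs
    _ = 1 / 2 := by rw [hgeo, hval]

lemma Gset_snd (m : ℕ) (hm : 1 ≤ m) (p : ℤ) (hp : p = 2 * (m : ℤ) + 1) (ε : ℝ) :
    ∀ u : List ℤ, ∀ z ∈ Gset p m ε u,
      ∃ y : ℝ, |y| ≤ 1 / 2 ∧ z.2 = (y + (cword p u : ℝ)) / (p : ℝ) ^ u.length := by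
  intro u
  induction u with
  | nil =>
      intro z hz
      exact ⟨z.2, Tset_snd_bound m hm p hp ε hz, by simp [cword]⟩
  | cons j w ih =>
      intro z hz
      simp only [Gset, Set.mem_iUnion, Set.mem_image] at hz
      obtain ⟨i, _, z', hz', rfl⟩ := hz
      obtain ⟨y, hy, hy2⟩ := ih z' hz'
      have hpne : (p : ℝ) ≠ 0 := by
        have : (p : ℝ) = 2 * m + 1 := by exact_mod_cast congrArg (Int.cast : ℤ → ℝ) hp
        have hm1 : (1 : ℝ) ≤ m := by exact_mod_cast hm
        rw [this]; linarith
      refine ⟨y, hy, ?_⟩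
      show (z'.2 + (j : ℝ)) / (p : ℝ) = _
      rw [hy2]
      simp only [cword, List.length_cons]
      push_cast
      field_simp
      ring

/-- if `|k - ℓ| ≥ 2` then `G_{j₁⋯j_n k} ∩ G_{j₁⋯j_n ℓ} = ∅`. -/
theorem stmt4 (m : ℕ) (hm : 1 ≤ m) (p : ℤ) (hp : p = 2 * (m : ℤ) + 1) (ε : ℝ)
    (n : ℕ) (hn : 1 ≤ n) (w : List ℤ) (hwlen : w.length = n)
    (hw : ∀ j ∈ w, |j| ≤ (m : ℤ)) (k l : ℤ) (hk : |k| ≤ (m : ℤ)) (hl : |l| ≤ (m : ℤ))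
    (hkl : 2 ≤ |k - l|) :
    Gset p m ε (w ++ [k]) ∩ Gset p m ε (w ++ [l]) = ∅ := by
  by_contra hne
  obtain ⟨z, hzk, hzl⟩ := Set.nonempty_iff_ne_empty.2 hne
  obtain ⟨y₀, hy₀, h0⟩ := Gset_snd m hm p hp ε (w ++ [k]) z hzk
  obtain ⟨y₁, hy₁, h1⟩ := Gset_snd m hm p hp ε (w ++ [l]) z hzl
  have hpne : (p : ℝ) ≠ 0 := by
    have : (p : ℝ) = 2 * m + 1 := by exact_mod_cast congrArg (Int.cast : ℤ → ℝ) hp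
    have hm1 : (1 : ℝ) ≤ m := by exact_mod_cast hm
    rw [this]; linarith
  have hlen : (w ++ [k]).length = (w ++ [l]).length := by simp
  have heq : y₀ + (cword p (w ++ [k]) : ℝ) = y₁ + (cword p (w ++ [l]) : ℝ) := by
    have := h0.symm.trans h1
    rw [hlen] at this
    field_simp at this
    linarith [this]
  rw [cword_append_single, cword_append_single] at heq
  push_cast at heq
  have hdiff : (k : ℝ) - l = y₁ - y₀ := by linarith
  have h2 : (2 : ℝ) ≤ |(k : ℝ) - l| := by exact_mod_cast hkl
  rw [hdiff] at h2
  have : |y₁ - y₀| ≤ 1 := by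
    calc |y₁ - y₀| ≤ |y₁| + |y₀| := abs_sub _ _
      _ ≤ 1 := by linarith
  linarith
end
end

section
/- Let n ≥ 1, let j₁, …, j_n ∈ {−m, …, m} and let k, ℓ ∈ {−m, …, m} with |k − ℓ| = 1. Then G_{j₁⋯j_n k} ∩ G_{j₁⋯j_n ℓ} is a nondegenerate line segment (i.e. equals the closed segment [u, v] between two distinct points u, v ∈ ℝ²) if and only if |ε| < p^{n+1}. -/
noncomputable section

/-!
A point of `G_w` is coded by a vertical digit sequence `j` extending `w`: its height is
`∑ j_t p^{-t-1}`, and since the horizontal digits sweep out exactly `[-1/2, 1/2]`, its abscissa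
ranges over the unit interval centred at `∑ b_{j_t} p^{-t-1}`. A common point of `G_{wk}` and
`G_{wl}` with `k = l + 1` has two vertical expansions that first differ by one at place `n`, and
this forces their tails to be `-m, -m, …` and `m, m, …`. Hence the intersection is a horizontal
line cut by two unit intervals whose centres differ by `(b_k - b_l) / p^{n+1}`, of absolute value
`|ε| / p^{n+1}`; it is a nondegenerate segment iff this is less than `1`.
-/

def radixValue (q : ℝ) (c : ℕ → ℝ) : ℝ := ∑' t, (q ^ (t + 1))⁻¹ * c t

section RadixValue

variable {q C C' : ℝ} {c d : ℕ → ℝ}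

lemma hasSum_inv_pow_succ (hq : 1 < q) : HasSum (fun t : ℕ => (q ^ (t + 1))⁻¹) (q - 1)⁻¹ := by
  have hq0 : q ≠ 0 := by linarith
  have hq1 : q - 1 ≠ 0 := by linarith
  have hterm : (fun t : ℕ => (q ^ (t + 1))⁻¹) = fun t => q⁻¹ * q⁻¹ ^ t := by
    funext t; rw [pow_succ', mul_inv, inv_pow]
  rw [hterm, show (q - 1)⁻¹ = q⁻¹ * (1 - q⁻¹)⁻¹ by field_simp]
  exact (hasSum_geometric_of_lt_one (inv_nonneg.2 (by linarith))
    (inv_lt_one_of_one_lt₀ hq)).mul_left _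

lemma summable_radix (hq : 1 < q) (hc : ∀ t, |c t| ≤ C) :
    Summable fun t => (q ^ (t + 1))⁻¹ * c t :=
  .of_norm_bounded ((hasSum_inv_pow_succ hq).summable.mul_right C) fun t => by
    rw [norm_mul, norm_inv, norm_pow, Real.norm_eq_abs, Real.norm_eq_abs,
      abs_of_pos (by linarith)]
    exact mul_le_mul_of_nonneg_left (hc t) (by positivity)

lemma radixValue_const (hq : 1 < q) (a : ℝ) : radixValue q (fun _ => a) = a / (q - 1) := by
  rw [radixValue, tsum_mul_right, (hasSum_inv_pow_succ hq).tsum_eq, div_eq_inv_mul]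

lemma radixValue_add (hq : 1 < q) (hc : ∀ t, |c t| ≤ C) (hd : ∀ t, |d t| ≤ C') :
    radixValue q (fun t => c t + d t) = radixValue q c + radixValue q d := by
  simp only [radixValue, mul_add]
  exact (summable_radix hq hc).tsum_add (summable_radix hq hd)

lemma radixValue_sub (hq : 1 < q) (hc : ∀ t, |c t| ≤ C) (hd : ∀ t, |d t| ≤ C') :
    radixValue q (fun t => c t - d t) = radixValue q c - radixValue q d := by
  simp only [radixValue, mul_sub]
  exact (summable_radix hq hc).tsum_sub (summable_radix hq hd)

lemma radixValue_le_radixValue (hq : 1 < q) (hc : ∀ t, |c t| ≤ C) (hd : ∀ t, |d t| ≤ C')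
    (h : ∀ t, c t ≤ d t) : radixValue q c ≤ radixValue q d :=
  (summable_radix hq hc).tsum_le_tsum
    (fun t => mul_le_mul_of_nonneg_left (h t) (by positivity)) (summable_radix hq hd)

lemma abs_radixValue_le (hq : 1 < q) (hc : ∀ t, |c t| ≤ C) :
    |radixValue q c| ≤ C / (q - 1) := by
  have lower := radixValue_le_radixValue (c := fun _ => -C) hq (fun _ => (abs_neg C).le) hc
    fun t => neg_le_of_abs_le (hc t)
  have upper := radixValue_le_radixValue (d := fun _ => C) hq hc (fun _ => le_rfl)
    fun t => le_of_abs_le (hc t)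
  rw [radixValue_const hq] at lower upper
  exact abs_le.2 ⟨by rwa [neg_div] at lower, upper⟩

lemma radixValue_eq_iff (hq : 1 < q) (hc : ∀ t, |c t| ≤ C) :
    radixValue q c = C / (q - 1) ↔ ∀ t, c t = C := by
  refine ⟨fun h => ?_, fun h => by rw [funext h, radixValue_const hq]⟩
  have hgap : HasSum (fun t => (q ^ (t + 1))⁻¹ * (C - c t)) 0 := by
    have hsub := ((hasSum_inv_pow_succ hq).mul_right C).sub (summable_radix hq hc).hasSum
    rwa [← radixValue, h, div_eq_inv_mul, sub_self,
      funext fun t => (mul_sub _ C (c t)).symm] at hsub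
  have hnonneg : ∀ t, 0 ≤ (q ^ (t + 1))⁻¹ * (C - c t) := fun t =>
    mul_nonneg (by positivity) (sub_nonneg.2 (le_of_abs_le (hc t)))
  intro t
  have ht := congr_fun ((hasSum_zero_iff_of_nonneg hnonneg).1 hgap) t
  have hpos : (q ^ (t + 1))⁻¹ ≠ 0 := by positivity
  simpa [hpos, sub_eq_zero, eq_comm] using ht

lemma radixValue_eq_sum_add (hq : 1 < q) (hc : ∀ t, |c t| ≤ C) (n : ℕ) :
    radixValue q c = ∑ t ∈ Finset.range n, (q ^ (t + 1))⁻¹ * c t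
      + (q ^ n)⁻¹ * radixValue q (fun t => c (t + n)) := by
  rw [radixValue, ← (summable_radix hq hc).sum_add_tsum_nat_add n, radixValue, ← tsum_mul_left]
  congr 1
  refine tsum_congr fun t => ?_
  rw [add_right_comm, pow_add, mul_inv]
  ring

lemma radixValue_eq_head_add (hq : 1 < q) (hc : ∀ t, |c t| ≤ C) :
    radixValue q c = (c 0 + radixValue q (fun t => c (t + 1))) / q := by
  rw [radixValue_eq_sum_add hq hc 1]
  simp only [Finset.range_one, Finset.sum_singleton, zero_add, pow_one]
  ring

lemma radixValue_single (n : ℕ) (a : ℝ) :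
    radixValue q (Pi.single n a) = (q ^ (n + 1))⁻¹ * a := by
  rw [radixValue, ← tsum_pi_single n ((q ^ (n + 1))⁻¹ * a)]
  refine tsum_congr fun t => ?_
  rcases eq_or_ne t n with rfl | ht <;> simp [*]

lemma radixValue_eq_zero_iff_of_carry (hq : 1 < q) (hd : ∀ t, |d t| ≤ q - 1) {n : ℕ}
    (hlow : ∀ t < n, d t = 0) (hn : d n = -1) :
    radixValue q d = 0 ↔ ∀ t, n < t → d t = q - 1 := by
  have hsplit :
      radixValue q d = (q ^ (n + 1))⁻¹ * (radixValue q (fun t => d (t + (n + 1))) - 1) := by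
    rw [radixValue_eq_sum_add hq hd (n + 1), Finset.sum_range_succ,
      Finset.sum_eq_zero fun t ht => by rw [hlow t (Finset.mem_range.1 ht), mul_zero], hn]
    ring
  have htail : radixValue q (fun t => d (t + (n + 1))) = 1 ↔ ∀ t, d (t + (n + 1)) = q - 1 := by
    rw [← radixValue_eq_iff hq fun t => hd _, div_self (by linarith : q - 1 ≠ 0)]
  rw [hsplit, mul_eq_zero, sub_eq_zero, htail]
  simp only [inv_eq_zero, pow_eq_zero_iff', (by linarith : q ≠ 0), false_and, false_or]
  refine ⟨fun h t ht => ?_, fun h t => h _ (by omega : n < t + (n + 1))⟩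
  simpa [Nat.sub_add_cancel ht] using h (t - (n + 1))

end RadixValue

lemma exists_radixValue_eq {m : ℕ} (hm : 1 ≤ m) {x : ℝ} (hx : |x| ≤ 1 / 2) :
    ∃ i : ℕ → ℤ, (∀ t, |i t| ≤ m) ∧ radixValue (2 * m + 1) (fun t => i t) = x := by
  obtain ⟨d, -, hd⟩ := Real.ofDigits_SurjOn (b := 2 * m + 1) (by omega)
    (show x + 1 / 2 ∈ Set.Icc 0 1 by constructor <;> linarith [abs_le.1 hx])
  have hq : (1 : ℝ) < 2 * m + 1 := by
    have : (1 : ℝ) ≤ m := by exact_mod_cast hm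
    linarith
  -- balanced digits are the standard base-`(2m+1)` digits of `x + 1/2`, shifted down by `m`
  refine ⟨fun t => (d t : ℤ) - m, fun t => ?_, ?_⟩
  · have := (d t).isLt
    exact abs_le.2 ⟨by dsimp only; omega, by dsimp only; omega⟩
  have hdigit : ∀ t, |((d t : ℕ) : ℝ)| ≤ 2 * m := fun t => by
    rw [Nat.abs_cast]; exact_mod_cast Nat.lt_succ_iff.1 (d t).isLt
  have hofDigits : radixValue (2 * m + 1) (fun t => ((d t : ℕ) : ℝ)) = x + 1 / 2 := by
    rw [← hd, Real.ofDigits, radixValue]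
    refine tsum_congr fun t => ?_
    rw [Real.ofDigitsTerm, mul_comm]
    push_cast; rfl
  push_cast
  rw [radixValue_sub hq hdigit (fun _ => (abs_of_nonneg (Nat.cast_nonneg m)).le), hofDigits,
    radixValue_const hq]
  have : (m : ℝ) ≠ 0 := by positivity
  field_simp
  ring

lemma abs_bshift_le (ε : ℝ) (j : ℤ) : |bshift ε j| ≤ |ε| := by
  unfold bshift; split <;> simp

lemma bshift_neg (ε : ℝ) (j : ℤ) : bshift ε (-j) = bshift ε j := by
  simp [bshift, odd_neg]

lemma abs_bshift_add_one_sub (ε : ℝ) (j : ℤ) : |bshift ε (j + 1) - bshift ε j| = |ε| := by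
  rcases Int.even_or_odd j with hj | hj
  · simp [bshift, hj.add_one, Int.not_odd_iff_even.2 hj]
  · simp [bshift, hj, Int.not_odd_iff_even.2 hj.add_one]

lemma abs_intCast_le {m : ℕ} {i : ℤ} (hi : |i| ≤ m) : |(i : ℝ)| ≤ m := by
  rw [← Int.cast_abs]; exact_mod_cast hi

def codedPoint (p : ℤ) (ε : ℝ) (i j : ℕ → ℤ) : ℝ × ℝ :=
  (radixValue p (fun t => i t + bshift ε (j t)), radixValue p (fun t => j t))

section Coding

variable {p : ℤ} {m : ℕ} {ε : ℝ}

lemma one_lt_of_eq_two_mul_add_one (hm : 1 ≤ m) (hp : p = 2 * m + 1) : (1 : ℝ) < p := by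
  have : (1 : ℝ) ≤ m := by exact_mod_cast hm
  rw [hp]; push_cast; linarith

lemma fmap_codedPoint_tail (hq : (1 : ℝ) < p) {i j : ℕ → ℤ} (hi : ∀ t, |i t| ≤ m)
    (hj : ∀ t, |j t| ≤ m) :
    fmap p ε (i 0) (j 0) (codedPoint p ε (fun t => i (t + 1)) (fun t => j (t + 1)))
      = codedPoint p ε i j := by
  have hij : ∀ t, |(i t : ℝ) + bshift ε (j t)| ≤ m + |ε| := fun t =>
    (abs_add_le _ _).trans (add_le_add (abs_intCast_le (hi t)) (abs_bshift_le ε _))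
  simp only [fmap, codedPoint]
  rw [radixValue_eq_head_add hq hij, radixValue_eq_head_add hq fun t => abs_intCast_le (hj t)]
  congr 1 <;> ring

lemma mem_Gset_iff (hq : (1 : ℝ) < p) {w : List ℤ} (hw : ∀ a ∈ w, |a| ≤ m) {z : ℝ × ℝ} :
    z ∈ Gset p m ε w ↔ ∃ i j : ℕ → ℤ, (∀ t, |i t| ≤ m) ∧ (∀ t, |j t| ≤ m) ∧
      (∀ t (ht : t < w.length), j t = w[t]) ∧ codedPoint p ε i j = z := by
  induction w generalizing z with
  | nil =>
    simp only [Gset, Tset, codedPoint, List.length_nil, Nat.not_lt_zero, IsEmpty.forall_iff,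
      implies_true, true_and, Prod.ext_iff, radixValue, eq_comm (b := z.1), eq_comm (b := z.2)]
    rfl
  | cons a w ih =>
    have ha : |a| ≤ m := hw a List.mem_cons_self
    have ih := @ih fun b hb => hw b (List.mem_cons_of_mem a hb)
    simp only [Gset, Set.mem_iUnion, Set.mem_image, Finset.mem_Icc, exists_prop]
    constructor
    · rintro ⟨i₀, hi₀, z', hz', rfl⟩
      obtain ⟨i, j, hi, hj, hpre, rfl⟩ := ih.1 hz'
      let I : ℕ → ℤ := fun | 0 => i₀ | t + 1 => i t
      let J : ℕ → ℤ := fun | 0 => a | t + 1 => j t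
      have hI : ∀ t, |I t| ≤ m := fun | 0 => abs_le.2 hi₀ | t + 1 => hi t
      have hJ : ∀ t, |J t| ≤ m := fun | 0 => ha | t + 1 => hj t
      refine ⟨I, J, hI, hJ, fun | 0, _ => rfl | t + 1, ht => hpre t (by simpa using ht), ?_⟩
      exact (fmap_codedPoint_tail hq hI hJ).symm
    · rintro ⟨i, j, hi, hj, hpre, rfl⟩
      have hj0 : j 0 = a := hpre 0 (by simp)
      refine ⟨i 0, abs_le.1 (hi 0), _, ih.2 ⟨_, _, fun t => hi (t + 1), fun t => hj (t + 1),
        fun t ht => hpre (t + 1) (by simpa using ht), rfl⟩, ?_⟩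
      rw [← hj0]
      exact fmap_codedPoint_tail hq hi hj

lemma codedPoint_fst (hq : (1 : ℝ) < p) {i j : ℕ → ℤ} (hi : ∀ t, |i t| ≤ m) :
    (codedPoint p ε i j).1 = radixValue p (fun t => i t) + radixValue p (fun t => bshift ε (j t)) :=
  radixValue_add hq (fun t => abs_intCast_le (hi t)) fun t => abs_bshift_le ε (j t)

lemma mem_Gset_iff_abs_sub_le (hm : 1 ≤ m) (hp : p = 2 * m + 1) {w : List ℤ}
    (hw : ∀ a ∈ w, |a| ≤ m) {z : ℝ × ℝ} :
    z ∈ Gset p m ε w ↔ ∃ j : ℕ → ℤ, (∀ t, |j t| ≤ m) ∧ (∀ t (ht : t < w.length), j t = w[t]) ∧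
      z.2 = radixValue p (fun t => j t) ∧
      |z.1 - radixValue p (fun t => bshift ε (j t))| ≤ 1 / 2 := by
  have hpR : (p : ℝ) = 2 * m + 1 := by rw [hp]; push_cast; ring
  have hq : (1 : ℝ) < p := one_lt_of_eq_two_mul_add_one hm hp
  rw [mem_Gset_iff hq hw]
  constructor
  · rintro ⟨i, j, hi, hj, hpre, rfl⟩
    refine ⟨j, hj, hpre, rfl, ?_⟩
    rw [codedPoint_fst hq hi, add_sub_cancel_right]
    have hm0 : (m : ℝ) ≠ 0 := by positivity
    convert abs_radixValue_le hq fun t => abs_intCast_le (hi t) using 1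
    rw [hpR]; field_simp; ring
  · rintro ⟨j, hj, hpre, hz₂, hz₁⟩
    obtain ⟨i, hi, hiz⟩ := exists_radixValue_eq hm hz₁
    refine ⟨i, j, hi, hj, hpre, Prod.ext ?_ hz₂.symm⟩
    rw [codedPoint_fst hq hi, hpR, hiz, ← hpR, sub_add_cancel]

end Coding

lemma radixValue_eq_iff_tails {m : ℕ} (hm : 1 ≤ m) {q : ℝ} (hq : q = 2 * m + 1)
    {j j' : ℕ → ℤ} (hj : ∀ t, |j t| ≤ m) (hj' : ∀ t, |j' t| ≤ m) {n : ℕ}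
    (hlow : ∀ t < n, j t = j' t) (hn : j n = j' n + 1) :
    radixValue q (fun t => j t) = radixValue q (fun t => j' t) ↔
      ∀ t, n < t → j t = -m ∧ j' t = m := by
  have hq1 : 1 < q := by
    have : (1 : ℝ) ≤ m := by exact_mod_cast hm
    linarith
  have hq2m : q - 1 = ((2 * m : ℤ) : ℝ) := by rw [hq]; push_cast; ring
  have hd : ∀ t, |(j' t : ℝ) - j t| ≤ q - 1 := fun t => by
    have := abs_le.1 (hj t); have := abs_le.1 (hj' t)
    rw [hq2m, ← Int.cast_sub, ← Int.cast_abs, Int.cast_le, abs_le]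
    omega
  rw [eq_comm, ← sub_eq_zero, ← radixValue_sub hq1 (fun t => abs_intCast_le (hj' t))
    (fun t => abs_intCast_le (hj t)), radixValue_eq_zero_iff_of_carry hq1 hd
    (fun t ht => by rw [hlow t ht, sub_self]) (by rw [hn]; push_cast; ring)]
  refine forall₂_congr fun t _ => ?_
  have := abs_le.1 (hj t); have := abs_le.1 (hj' t)
  rw [hq2m, ← Int.cast_sub, Int.cast_inj]
  omega

lemma abs_getD_le {m : ℕ} {u : List ℤ} (hu : ∀ a ∈ u, |a| ≤ m) {τ : ℤ} (hτ : |τ| ≤ m) (t : ℕ) :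
    |u.getD t τ| ≤ m := by
  rcases lt_or_ge t u.length with ht | ht
  · rw [List.getD_eq_getElem u τ ht]; exact hu _ (List.getElem_mem ht)
  · rwa [List.getD_eq_default u τ ht]

lemma eq_getD_of_prefix {j : ℕ → ℤ} {u : List ℤ} {τ : ℤ}
    (hpre : ∀ t (ht : t < u.length), j t = u[t]) (htail : ∀ t, u.length ≤ t → j t = τ) :
    j = fun t => u.getD t τ := by
  funext t
  rcases lt_or_ge t u.length with ht | ht
  · rw [hpre t ht, List.getD_eq_getElem u τ ht]
  · rw [htail t ht, List.getD_eq_default u τ ht]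

section Intersection

variable {p : ℤ} {m : ℕ} {ε : ℝ} {w : List ℤ} {k l : ℤ}

lemma eq_of_lt_and_eq_add_one_of_prefix (hkl : k = l + 1) {j j' : ℕ → ℤ}
    (hj : ∀ t (ht : t < (w ++ [k]).length), j t = (w ++ [k])[t])
    (hj' : ∀ t (ht : t < (w ++ [l]).length), j' t = (w ++ [l])[t]) :
    (∀ t < w.length, j t = j' t) ∧ j w.length = j' w.length + 1 := by
  refine ⟨fun t ht => ?_, ?_⟩
  · rw [hj t (by simp; omega), hj' t (by simp; omega), List.getElem_append_left ht,
      List.getElem_append_left ht]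
  · have hjn : j w.length = k := by simpa using hj w.length (by simp)
    have hj'n : j' w.length = l := by simpa using hj' w.length (by simp)
    rw [hjn, hj'n, hkl]

lemma inter_Gset_eq (hm : 1 ≤ m) (hp : p = 2 * m + 1) (hw : ∀ a ∈ w, |a| ≤ m)
    (hk : |k| ≤ m) (hl : |l| ≤ m) (hkl : k = l + 1) :
    Gset p m ε (w ++ [k]) ∩ Gset p m ε (w ++ [l]) =
      {z | z.2 = radixValue p (fun t => (w ++ [k]).getD t (-m))
        ∧ |z.1 - radixValue p (fun t => bshift ε ((w ++ [k]).getD t (-m)))| ≤ 1 / 2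
        ∧ |z.1 - radixValue p (fun t => bshift ε ((w ++ [l]).getD t m))| ≤ 1 / 2} := by
  have hpR : (p : ℝ) = 2 * m + 1 := by rw [hp]; push_cast; ring
  have hwk : ∀ a ∈ w ++ [k], |a| ≤ m := by simpa [or_imp, forall_and] using ⟨hw, hk⟩
  have hwl : ∀ a ∈ w ++ [l], |a| ≤ m := by simpa [or_imp, forall_and] using ⟨hw, hl⟩
  have hm' : |(m : ℤ)| ≤ m := by simp
  ext z
  simp only [Set.mem_inter_iff, Set.mem_ofPred_eq, mem_Gset_iff_abs_sub_le hm hp hwk,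
    mem_Gset_iff_abs_sub_le hm hp hwl]
  constructor
  · rintro ⟨⟨j, hj, hpre, hz₂, hz₁⟩, ⟨j', hj', hpre', hz₂', hz₁'⟩⟩
    obtain ⟨hlow, hn⟩ := eq_of_lt_and_eq_add_one_of_prefix hkl hpre hpre'
    have htails := (radixValue_eq_iff_tails hm hpR hj hj' hlow hn).1 (hz₂ ▸ hz₂')
    rw [eq_getD_of_prefix hpre fun t ht => (htails t (by simpa using ht)).1] at hz₂ hz₁
    rw [eq_getD_of_prefix hpre' fun t ht => (htails t (by simpa using ht)).2] at hz₁'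
    exact ⟨hz₂, hz₁, hz₁'⟩
  · rintro ⟨hz₂, hz₁, hz₁'⟩
    have hjk : ∀ t (ht : t < (w ++ [k]).length), (w ++ [k]).getD t (-m) = (w ++ [k])[t] :=
      fun _ ht => List.getD_eq_getElem _ _ ht
    have hjl : ∀ t (ht : t < (w ++ [l]).length), (w ++ [l]).getD t m = (w ++ [l])[t] :=
      fun _ ht => List.getD_eq_getElem _ _ ht
    obtain ⟨hlow, hn⟩ := eq_of_lt_and_eq_add_one_of_prefix hkl hjk hjl
    have hbk := abs_getD_le hwk (abs_neg (m : ℤ) ▸ hm')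
    have hbl := abs_getD_le hwl hm'
    have hsame := (radixValue_eq_iff_tails hm hpR hbk hbl hlow hn).2 fun t ht =>
      ⟨List.getD_eq_default _ _ (by simpa using ht), List.getD_eq_default _ _ (by simpa using ht)⟩
    exact ⟨⟨_, hbk, hjk, hz₂, hz₁⟩, ⟨_, hbl, hjl, hz₂.trans hsame, hz₁'⟩⟩

end Intersection

lemma exists_segment_eq_iff (a b y r : ℝ) :
    (∃ u v : ℝ × ℝ, u ≠ v ∧
      {z : ℝ × ℝ | z.2 = y ∧ |z.1 - a| ≤ r ∧ |z.1 - b| ≤ r} = segment ℝ u v) ↔ |a - b| < 2 * r := by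
  constructor
  · rintro ⟨u, v, huv, hS⟩
    obtain ⟨hu₂, hua, hub⟩ : u ∈ {z : ℝ × ℝ | z.2 = y ∧ |z.1 - a| ≤ r ∧ |z.1 - b| ≤ r} :=
      hS ▸ left_mem_segment ℝ u v
    obtain ⟨hv₂, hva, hvb⟩ : v ∈ {z : ℝ × ℝ | z.2 = y ∧ |z.1 - a| ≤ r ∧ |z.1 - b| ≤ r} :=
      hS ▸ right_mem_segment ℝ u v
    by_contra! hgap
    refine huv (Prod.ext ?_ (hu₂.trans hv₂.symm))
    rw [abs_le] at hua hub hva hvb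
    rcases le_abs'.1 hgap with h | h <;> linarith
  · intro hgap
    have hlo : max a b - r < min a b + r := by grind
    have hIcc : ∀ x, x ∈ Set.Icc (max a b - r) (min a b + r) ↔ |x - a| ≤ r ∧ |x - b| ≤ r :=
      fun x => by simp only [Set.mem_Icc, abs_le]; grind
    refine ⟨(max a b - r, y), (min a b + r, y), by simp [hlo.ne], ?_⟩
    rw [← Prod.image_mk_segment_left, segment_eq_Icc hlo.le]
    ext ⟨x, y'⟩
    simp only [Set.mem_ofPred_eq, Set.mem_image, Prod.mk.injEq, ← hIcc]
    grind

lemma bshift_getD_sub_eq_single (ε : ℝ) (w : List ℤ) (k l : ℤ) (m : ℤ) :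
    (fun t => bshift ε ((w ++ [k]).getD t (-m)) - bshift ε ((w ++ [l]).getD t m))
      = Pi.single w.length (bshift ε k - bshift ε l) := by
  funext t
  rcases lt_trichotomy t w.length with h | rfl | h
  · rw [List.getD_append _ _ _ _ h, List.getD_append _ _ _ _ h, List.getD_eq_getElem _ _ h,
      List.getD_eq_getElem _ _ h, sub_self, Pi.single_eq_of_ne h.ne]
  · simp
  · rw [List.getD_eq_default _ _ (by simpa using h), List.getD_eq_default _ _ (by simpa using h),
      bshift_neg, sub_self, Pi.single_eq_of_ne h.ne']

lemma exists_segment_eq_inter_Gset_iff {p : ℤ} {m : ℕ} {ε : ℝ} {w : List ℤ} {k l : ℤ}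
    (hm : 1 ≤ m) (hp : p = 2 * m + 1) (hw : ∀ a ∈ w, |a| ≤ m) (hk : |k| ≤ m) (hl : |l| ≤ m)
    (hkl : k = l + 1) :
    (∃ u v : ℝ × ℝ, u ≠ v ∧ Gset p m ε (w ++ [k]) ∩ Gset p m ε (w ++ [l]) = segment ℝ u v)
      ↔ |ε| < (p : ℝ) ^ (w.length + 1) := by
  have hq := one_lt_of_eq_two_mul_add_one hm hp
  have hgap : |radixValue p (fun t => bshift ε ((w ++ [k]).getD t (-m)))
      - radixValue p (fun t => bshift ε ((w ++ [l]).getD t m))|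
      = |ε| / (p : ℝ) ^ (w.length + 1) := by
    rw [← radixValue_sub hq (fun t => abs_bshift_le ε _) (fun t => abs_bshift_le ε _),
      bshift_getD_sub_eq_single, radixValue_single, hkl, abs_mul, abs_bshift_add_one_sub,
      abs_inv, abs_pow, abs_of_pos (by linarith), inv_mul_eq_div]
  rw [inter_Gset_eq hm hp hw hk hl hkl, exists_segment_eq_iff, hgap, mul_one_div_cancel two_ne_zero,
    div_lt_one (by positivity)]

theorem stmt5_general (m : ℕ) (hm : 1 ≤ m) (p : ℤ) (hp : p = 2 * (m : ℤ) + 1) (ε : ℝ)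
    (n : ℕ) (w : List ℤ) (hwlen : w.length = n)
    (hw : ∀ j ∈ w, |j| ≤ (m : ℤ)) (k l : ℤ) (hk : |k| ≤ (m : ℤ)) (hl : |l| ≤ (m : ℤ))
    (hkl : |k - l| = 1) :
    (∃ u v : ℝ × ℝ, u ≠ v ∧ Gset p m ε (w ++ [k]) ∩ Gset p m ε (w ++ [l]) = segment ℝ u v)
      ↔ |ε| < (p : ℝ) ^ (n + 1) := by
  subst hwlen
  rcases (abs_eq zero_le_one).1 hkl with h | h
  · exact exists_segment_eq_inter_Gset_iff hm hp hw hk hl (by omega)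
  · rw [Set.inter_comm]
    exact exists_segment_eq_inter_Gset_iff hm hp hw hl hk (by omega)

/-- if `|k - ℓ| = 1` then `G_{j₁⋯j_n k} ∩ G_{j₁⋯j_n ℓ}` is a nondegenerate
line segment if and only if `|ε| < p^(n+1)`. -/
theorem stmt5 (m : ℕ) (hm : 1 ≤ m) (p : ℤ) (hp : p = 2 * (m : ℤ) + 1) (ε : ℝ)
    (n : ℕ) (hn : 1 ≤ n) (w : List ℤ) (hwlen : w.length = n)
    (hw : ∀ j ∈ w, |j| ≤ (m : ℤ)) (k l : ℤ) (hk : |k| ≤ (m : ℤ)) (hl : |l| ≤ (m : ℤ))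
    (hkl : |k - l| = 1) :
    (∃ u v : ℝ × ℝ, u ≠ v ∧ Gset p m ε (w ++ [k]) ∩ Gset p m ε (w ++ [l]) = segment ℝ u v)
      ↔ |ε| < (p : ℝ) ^ (n + 1) :=
  stmt5_general m hm p hp ε n w hwlen hw k l hk hl hkl
end
end

section
/- For every t ∈ D_{ε,∞} and every d ∈ D_ε, the point p·t + d belongs to D_{ε,∞}, and p·(T_ε + t) = ⋃_{d ∈ D_ε} (T_ε + p·t + d), where p·S = {p z : z ∈ S}. In other words, the tiling T_ε + D_{ε,∞} is self-replicating with respect to multiplication by p. -/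
/-!
Writing points of `T_ε` as radix-`p` expansions `∑ p^{-(k+1)} d_k` with digits `d_k ∈ D_ε`,
multiplication by `p` splits off the leading digit `d_0` and leaves an expansion of the same
kind; conversely any digit can be prepended. Since `D_ε` is bounded and `|p| > 1` all these
series converge, so `p • T_ε = D_ε + T_ε`, and translating by `p • t` gives the tiling
identity. Prepending a digit to a finite expansion gives the first claim in the same way.
-/

noncomputable section

/-- The digit set `D_ε = {(i + b_j, j) : i, j ∈ {-m, …, m}}`. -/
def Ddig (m : ℕ) (ε : ℝ) : Set (ℝ × ℝ) :=
  {d | ∃ i j : ℤ, |i| ≤ (m : ℤ) ∧ |j| ≤ (m : ℤ) ∧ d = ((i : ℝ) + bshift ε j, (j : ℝ))}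

/-- `D_{ε,∞} = {∑_{j=0}^{k-1} p^j d_j : k ≥ 1, d_0, …, d_{k-1} ∈ D_ε}`. -/
def Dinf (p : ℤ) (m : ℕ) (ε : ℝ) : Set (ℝ × ℝ) :=
  {x | ∃ k : ℕ, 1 ≤ k ∧ ∃ d : ℕ → ℝ × ℝ, (∀ l, l < k → d l ∈ Ddig m ε) ∧
      x = ∑ l ∈ Finset.range k, (p : ℝ) ^ l • d l}

open Pointwise

section SelfSimilar

variable {E : Type*} [NormedAddCommGroup E] [NormedSpace ℝ E]

def selfSimilarSet (p : ℝ) (D : Set E) : Set E :=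
  {z | ∃ d : ℕ → E, (∀ k, d k ∈ D) ∧ z = ∑' k, (p ^ (k + 1))⁻¹ • d k}

variable [CompleteSpace E] {p C : ℝ} {d : ℕ → E}

lemma summable_inv_pow_smul (hp : 1 < |p|) (hd : ∀ k, ‖d k‖ ≤ C) :
    Summable fun k ↦ (p ^ k)⁻¹ • d k := by
  have hgeom : Summable fun k : ℕ ↦ C * |p|⁻¹ ^ k :=
    (summable_geometric_of_lt_one (by positivity) (inv_lt_one_of_one_lt₀ hp)).mul_left C
  refine hgeom.of_norm_bounded fun k ↦ ?_
  rw [norm_smul, norm_inv, norm_pow, Real.norm_eq_abs, inv_pow, mul_comm]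
  exact mul_le_mul_of_nonneg_right (hd k) (by positivity)

lemma summable_inv_pow_succ_smul (hp : 1 < |p|) (hd : ∀ k, ‖d k‖ ≤ C) :
    Summable fun k ↦ (p ^ (k + 1))⁻¹ • d k := by
  simpa only [pow_succ, mul_inv, mul_comm _ p⁻¹, mul_smul] using
    (summable_inv_pow_smul hp hd).const_smul p⁻¹

lemma smul_tsum_inv_pow_succ_smul (hp : 1 < |p|) (hd : ∀ k, ‖d k‖ ≤ C) :
    p • ∑' k, (p ^ (k + 1))⁻¹ • d k = d 0 + ∑' k, (p ^ (k + 1))⁻¹ • d (k + 1) := by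
  have hp0 : p ≠ 0 := by rintro rfl; simp at hp; linarith
  have hshift : ∀ k, p • (p ^ (k + 1))⁻¹ • d k = (p ^ k)⁻¹ • d k := fun k ↦ by
    rw [smul_smul, pow_succ, mul_inv, ← mul_assoc, mul_comm p, mul_assoc, mul_inv_cancel₀ hp0,
      mul_one]
  rw [← tsum_const_smul'', funext hshift, (summable_inv_pow_smul hp hd).tsum_eq_zero_add]
  simp

theorem smul_selfSimilarSet (hp : 1 < |p|) {D : Set E} (hD : Bornology.IsBounded D) :
    p • selfSimilarSet p D = D + selfSimilarSet p D := by
  obtain ⟨C, hC⟩ := isBounded_iff_forall_norm_le.mp hD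
  ext x
  simp only [Set.mem_smul_set, Set.mem_add]
  constructor
  · rintro ⟨_, ⟨d, hd, rfl⟩, rfl⟩
    exact ⟨d 0, hd 0, _, ⟨fun k ↦ d (k + 1), fun k ↦ hd (k + 1), rfl⟩,
      (smul_tsum_inv_pow_succ_smul hp fun k ↦ hC _ (hd k)).symm⟩
  · rintro ⟨a, ha, _, ⟨d, hd, rfl⟩, rfl⟩
    let d' : ℕ → E := fun k ↦ match k with | 0 => a | k + 1 => d k
    have hd' : ∀ k, d' k ∈ D := fun | 0 => ha | k + 1 => hd k
    exact ⟨_, ⟨d', hd', rfl⟩, smul_tsum_inv_pow_succ_smul hp fun k ↦ hC _ (hd' k)⟩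

end SelfSimilar

lemma smul_image_add_right_eq_biUnion {α M : Type*} [Monoid α] [AddCommMonoid M]
    [DistribMulAction α M] {c : α} {S D : Set M} (h : c • S = D + S) (t : M) :
    c • ((· + t) '' S) = ⋃ d ∈ D, (· + (c • t + d)) '' S := by
  ext x
  have := Set.ext_iff.mp h
  simp only [Set.mem_smul_set, Set.mem_add, Set.mem_image, Set.mem_iUnion] at this ⊢
  constructor
  · rintro ⟨_, ⟨z, hz, rfl⟩, rfl⟩
    obtain ⟨d, hd, w, hw, hdw⟩ := (this (c • z)).mp ⟨z, hz, rfl⟩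
    exact ⟨d, hd, w, hw, by rw [smul_add, ← hdw]; abel⟩
  · rintro ⟨d, hd, w, hw, rfl⟩
    obtain ⟨z, hz, hzw⟩ := (this (d + w)).mpr ⟨d, hd, w, hw, rfl⟩
    exact ⟨z + t, ⟨z, hz, rfl⟩, by rw [smul_add, hzw]; abel⟩

lemma norm_le_of_mem_Ddig {m : ℕ} {ε : ℝ} {d : ℝ × ℝ} (hd : d ∈ Ddig m ε) :
    ‖d‖ ≤ m + |ε| := by
  obtain ⟨i, j, hi, hj, rfl⟩ := hd
  have hi' : |(i : ℝ)| ≤ m := by exact_mod_cast hi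
  have hj' : |(j : ℝ)| ≤ m := by exact_mod_cast hj
  have hb : |bshift ε j| ≤ |ε| := by unfold bshift; split <;> simp
  simp only [Prod.norm_mk, Real.norm_eq_abs, max_le_iff]
  exact ⟨(abs_add_le _ _).trans (add_le_add hi' hb),
    hj'.trans (le_add_of_nonneg_right (abs_nonneg ε))⟩

lemma isBounded_Ddig (m : ℕ) (ε : ℝ) : Bornology.IsBounded (Ddig m ε) :=
  isBounded_iff_forall_norm_le.mpr ⟨_, fun _ ↦ norm_le_of_mem_Ddig⟩

lemma tsum_inv_pow_succ_smul_prod {p C : ℝ} (hp : 1 < |p|) {d : ℕ → ℝ × ℝ}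
    (hd : ∀ k, ‖d k‖ ≤ C) :
    ∑' k, (p ^ (k + 1))⁻¹ • d k =
      (∑' k, (p ^ (k + 1))⁻¹ * (d k).1, ∑' k, (p ^ (k + 1))⁻¹ * (d k).2) := by
  have h₁ := summable_inv_pow_succ_smul hp fun k ↦ (norm_fst_le (d k)).trans (hd k)
  have h₂ := summable_inv_pow_succ_smul hp fun k ↦ (norm_snd_le (d k)).trans (hd k)
  exact (h₁.hasSum.prodMk h₂.hasSum).tsum_eq

lemma Tset_eq_selfSimilarSet {p : ℤ} (hp : 1 < |(p : ℝ)|) (m : ℕ) (ε : ℝ) :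
    Tset p m ε = selfSimilarSet (p : ℝ) (Ddig m ε) := by
  ext z
  constructor
  · rintro ⟨i, j, hi, hj, hz₁, hz₂⟩
    have hd : ∀ k, ((i k : ℝ) + bshift ε (j k), (j k : ℝ)) ∈ Ddig m ε :=
      fun k ↦ ⟨i k, j k, hi k, hj k, rfl⟩
    refine ⟨_, hd, ?_⟩
    rw [tsum_inv_pow_succ_smul_prod hp fun k ↦ norm_le_of_mem_Ddig (hd k)]
    exact Prod.ext hz₁ hz₂
  · rintro ⟨d, hd, rfl⟩
    rw [tsum_inv_pow_succ_smul_prod hp fun k ↦ norm_le_of_mem_Ddig (hd k)]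
    choose i j hi hj hij using hd
    exact ⟨i, j, hi, hj, by simp only [hij], by simp only [hij]⟩

lemma smul_add_mem_Dinf {p : ℤ} {m : ℕ} {ε : ℝ} {t d : ℝ × ℝ} (ht : t ∈ Dinf p m ε)
    (hd : d ∈ Ddig m ε) : (p : ℝ) • t + d ∈ Dinf p m ε := by
  obtain ⟨k, -, e, he, rfl⟩ := ht
  refine ⟨k + 1, by omega, fun | 0 => d | l + 1 => e l,
    fun | 0, _ => hd | l + 1, hl => he l (by omega), ?_⟩
  rw [Finset.sum_range_succ', Finset.smul_sum, pow_zero, one_smul]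
  simp only [smul_smul, ← pow_succ']

/-- for every `t ∈ D_{ε,∞}` and `d ∈ D_ε`, the point `p·t + d` belongs to
`D_{ε,∞}`, and `p·(T_ε + t) = ⋃_{d ∈ D_ε} (T_ε + p·t + d)`: the tiling `T_ε + D_{ε,∞}`
is self-replicating with respect to multiplication by `p`. -/
theorem stmt13 (p : ℤ) (m : ℕ) (hm : 1 ≤ m) (hp : |p| = 2 * (m : ℤ) + 1) (ε : ℝ) :
    ∀ t ∈ Dinf p m ε,
      (∀ d ∈ Ddig m ε, (p : ℝ) • t + d ∈ Dinf p m ε) ∧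
      (p : ℝ) • ((· + t) '' Tset p m ε) =
        ⋃ d ∈ Ddig m ε, (· + ((p : ℝ) • t + d)) '' Tset p m ε := by
  intro t ht
  have hp₁ : 1 < |(p : ℝ)| := by
    have : (1 : ℝ) ≤ m := by exact_mod_cast hm
    rw [← Int.cast_abs, hp]
    push_cast
    linarith
  have hT : (p : ℝ) • Tset p m ε = Ddig m ε + Tset p m ε := by
    rw [Tset_eq_selfSimilarSet hp₁]
    exact smul_selfSimilarSet hp₁ (isBounded_Ddig m ε)
  exact ⟨fun d hd ↦ smul_add_mem_Dinf ht hd, smul_image_add_right_eq_biUnion hT t⟩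
end
end

section
/- For every finite subset Σ ⊆ D_{ε,∞} there exists R > 0 such that for every x ∈ ℝ² there exists t ∈ ℝ² with t + Σ ⊆ D_{ε,∞} and t + Σ contained in the closed ball of radius R centered at x. (Local isomorphism property of the tiling T_ε + D_{ε,∞}.) -/
/-!
Balanced base-`p` expansions, with digits in `{-m, …, m}`, represent every integer. Taking the
digits `j_l` of `round y₂` and then the digits `i_l` of `round (y₁ - ∑ p^l b_{j_l})` gives a
point of `D_{ε,∞}` within distance `1` of any `y ∈ ℝ²`.
If every `s ∈ Σ` has an expansion with `K` digits, then concatenating digit strings shows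
`s + p^K w ∈ D_{ε,∞}` for all `w ∈ D_{ε,∞}`. So `t = p^K w`, with `w` close to `p^{-K} x`,
works for `R = |p|^K + max_{s ∈ Σ} ‖s‖`.
-/

noncomputable section

/-- The Euclidean norm on `ℝ × ℝ`. -/
def eucNorm (z : ℝ × ℝ) : ℝ := Real.sqrt (z.1 ^ 2 + z.2 ^ 2)

open Finset Filter

lemma eucNorm_eq_norm_complex (z : ℝ × ℝ) :
    eucNorm z = ‖Complex.equivRealProdLm.symm z‖ := by
  simp [eucNorm, Complex.norm_def, Complex.normSq_apply, sq]

lemma eucNorm_add_le (a b : ℝ × ℝ) : eucNorm (a + b) ≤ eucNorm a + eucNorm b := by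
  simpa only [eucNorm_eq_norm_complex, map_add] using norm_add_le _ _

lemma eucNorm_smul (c : ℝ) (z : ℝ × ℝ) : eucNorm (c • z) = |c| * eucNorm z := by
  rw [eucNorm_eq_norm_complex, eucNorm_eq_norm_complex, map_smul, norm_smul, Real.norm_eq_abs]

lemma eucNorm_le_abs_add_abs (z : ℝ × ℝ) : eucNorm z ≤ |z.1| + |z.2| := by
  refine Real.sqrt_le_iff.2 ⟨by positivity, ?_⟩
  nlinarith [sq_abs z.1, sq_abs z.2, abs_nonneg z.1, abs_nonneg z.2]

section BalancedDigits

variable {p : ℤ} {m : ℕ}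

lemma exists_balanced_digit (hp : |p| = 2 * (m : ℤ) + 1) (n : ℤ) :
    ∃ d q : ℤ, |d| ≤ m ∧ n = d + p * q := by
  have hp0 : p ≠ 0 := by rintro rfl; simp at hp; omega
  have hlt := Int.emod_lt (n + m) hp0
  have hnonneg := Int.emod_nonneg (n + m) hp0
  rw [← Int.abs_eq_natAbs, hp] at hlt
  refine ⟨(n + m) % p - m, (n + m) / p, abs_le.2 ⟨by omega, by omega⟩, ?_⟩
  have := Int.emod_add_mul_ediv (n + m) p
  linarith

theorem exists_balanced_expansion (hm : 1 ≤ m) (hp : |p| = 2 * (m : ℤ) + 1) (n : ℤ) :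
    ∃ j : ℕ → ℤ, (∀ l, |j l| ≤ m) ∧ ∃ k, (∀ l ≥ k, j l = 0) ∧
      n = ∑ l ∈ range k, p ^ l * j l := by
  by_cases hn : n = 0
  · exact ⟨0, by simp, 0, by simp, by simp [hn]⟩
  obtain ⟨d, q, hd, hn_eq⟩ := exists_balanced_digit hp n
  have hq : |q| < |n| := by
    have : (2 * m + 1) * |q| ≤ |n| + m := by
      rw [← hp, ← abs_mul, show p * q = n - d by linarith]
      linarith [abs_sub n d]
    nlinarith [Int.one_le_abs hn]
  have h_natAbs_lt : q.natAbs < n.natAbs := by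
    rw [Int.abs_eq_natAbs, Int.abs_eq_natAbs] at hq; omega
  obtain ⟨j, hj, k, hjk, hq_eq⟩ := exists_balanced_expansion hm hp q
  refine ⟨fun l => if l = 0 then d else j (l - 1), ?_, k + 1, ?_, ?_⟩
  · rintro (_ | l) <;> simp [hd, hj]
  · rintro (_ | l) hl
    · omega
    · simpa using hjk l (by omega)
  · rw [sum_range_succ', hn_eq, hq_eq, mul_sum]
    simp only [Nat.add_one_ne_zero, if_false, Nat.add_sub_cancel, if_true, pow_zero, one_mul,
      pow_succ]
    rw [add_comm]
    congr 1
    exact sum_congr rfl fun l _ => by ring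
termination_by n.natAbs

end BalancedDigits

def HasDigits (p : ℤ) (m : ℕ) (ε : ℝ) (k : ℕ) (x : ℝ × ℝ) : Prop :=
  ∃ d : ℕ → ℝ × ℝ, (∀ l, l < k → d l ∈ Ddig m ε) ∧ x = ∑ l ∈ range k, (p : ℝ) ^ l • d l

section Digits

variable {p : ℤ} {m : ℕ} {ε : ℝ} {k k' : ℕ} {x w : ℝ × ℝ}

lemma zero_mem_Ddig : (0 : ℝ × ℝ) ∈ Ddig m ε :=
  ⟨0, 0, by simp, by simp, by simp [bshift, Prod.ext_iff]⟩

lemma HasDigits.mono (hx : HasDigits p m ε k x) (hk : k ≤ k') : HasDigits p m ε k' x := by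
  obtain ⟨d, hd, rfl⟩ := hx
  refine ⟨fun l => if l < k then d l else 0, fun l _ => ?_, ?_⟩
  · dsimp only
    split_ifs with hl
    exacts [hd l hl, zero_mem_Ddig]
  · rw [Finset.eventually_constant_sum (fun l hl => by simp [not_lt.2 hl]) hk]
    exact sum_congr rfl fun l hl => by simp [mem_range.1 hl]

lemma HasDigits.add_pow_smul (hx : HasDigits p m ε k x) (hw : HasDigits p m ε k' w) :
    HasDigits p m ε (k + k') (x + (p : ℝ) ^ k • w) := by
  obtain ⟨d, hd, rfl⟩ := hx
  obtain ⟨e, he, rfl⟩ := hw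
  refine ⟨fun l => if l < k then d l else e (l - k), fun l hl => ?_, ?_⟩
  · dsimp only
    split_ifs with h
    exacts [hd l h, he (l - k) (by omega)]
  · rw [sum_range_add, smul_sum]
    congr 1
    · exact sum_congr rfl fun l hl => by simp [mem_range.1 hl]
    · exact sum_congr rfl fun l _ => by simp [smul_smul, pow_add]

lemma eventually_hasDigits_of_mem_Dinf (hx : x ∈ Dinf p m ε) :
    ∀ᶠ K in atTop, HasDigits p m ε K x := by
  obtain ⟨k, -, hk⟩ := hx
  exact eventually_atTop.2 ⟨k, fun K hK => HasDigits.mono hk hK⟩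

theorem exists_mem_Dinf_eucNorm_sub_le_one (hm : 1 ≤ m) (hp : |p| = 2 * (m : ℤ) + 1)
    (y : ℝ × ℝ) : ∃ w ∈ Dinf p m ε, eucNorm (w - y) ≤ 1 := by
  obtain ⟨j, hj, k₂, hjk, hj_sum⟩ := exists_balanced_expansion hm hp (round y.2)
  set c := ∑ l ∈ range k₂, (p : ℝ) ^ l * bshift ε (j l)
  obtain ⟨i, hi, k₁, hik, hi_sum⟩ := exists_balanced_expansion hm hp (round (y.1 - c))
  set K := max (max k₁ k₂) 1
  have hk₁ : k₁ ≤ K := le_trans (le_max_left _ _) (le_max_left _ _)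
  have hk₂ : k₂ ≤ K := le_trans (le_max_right _ _) (le_max_left _ _)
  set w := ∑ l ∈ range K, (p : ℝ) ^ l • ((i l : ℝ) + bshift ε (j l), (j l : ℝ))
  have hw₁ : w.1 = round (y.1 - c) + c := by
    have hc : ∑ l ∈ range K, (p : ℝ) ^ l * bshift ε (j l) = c :=
      Finset.eventually_constant_sum (fun l hl => by simp [hjk l hl, bshift]) hk₂
    have hi_sum' : ∑ l ∈ range K, (p : ℝ) ^ l * i l = round (y.1 - c) := by
      rw [Finset.eventually_constant_sum (fun l hl => by simp [hik l hl]) hk₁, hi_sum]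
      push_cast; rfl
    simp only [w, Prod.fst_sum, Prod.smul_fst, smul_eq_mul, mul_add, sum_add_distrib, hc,
      hi_sum']
  have hw₂ : w.2 = round y.2 := by
    simp only [w, Prod.snd_sum, Prod.smul_snd, smul_eq_mul]
    rw [Finset.eventually_constant_sum (fun l hl => by simp [hjk l hl]) hk₂, hj_sum]
    push_cast; rfl
  refine ⟨w, ⟨K, le_max_right _ _, _, fun l _ => ⟨i l, j l, hi l, hj l, rfl⟩, rfl⟩, ?_⟩
  have h₁ : |(w - y).1| ≤ 1 / 2 := by
    rw [Prod.fst_sub, hw₁, abs_sub_comm,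
      show y.1 - (round (y.1 - c) + c) = y.1 - c - round (y.1 - c) by ring]
    exact abs_sub_round _
  have h₂ : |(w - y).2| ≤ 1 / 2 := by
    rw [Prod.snd_sub, hw₂, abs_sub_comm]
    exact abs_sub_round _
  linarith [eucNorm_le_abs_add_abs (w - y)]

end Digits

/-- local isomorphism property: for every finite `Σ ⊆ D_{ε,∞}` there is
`R > 0` such that every closed ball of radius `R` contains a translate `t + Σ ⊆ D_{ε,∞}`. -/
theorem stmt14 (p : ℤ) (m : ℕ) (hm : 1 ≤ m) (hp : |p| = 2 * (m : ℤ) + 1) (ε : ℝ)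
    (S : Set (ℝ × ℝ)) (hS : S ⊆ Dinf p m ε) (hfin : S.Finite) :
    ∃ R : ℝ, 0 < R ∧ ∀ x : ℝ × ℝ, ∃ t : ℝ × ℝ,
      ∀ s ∈ S, t + s ∈ Dinf p m ε ∧ eucNorm (t + s - x) ≤ R := by
  have hp0 : (p : ℝ) ≠ 0 := by rintro h; norm_cast at h; subst h; simp at hp; omega
  obtain ⟨K, hK⟩ := (hfin.eventually_all.2
    fun s hs => eventually_hasDigits_of_mem_Dinf (hS hs)).exists
  obtain ⟨B, hB0, hB⟩ := (hfin.image eucNorm).bddAbove.exists_ge 0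
  refine ⟨|(p : ℝ)| ^ K + B, by positivity, fun x => ?_⟩
  obtain ⟨w, ⟨k, hk, hw⟩, hwx⟩ := exists_mem_Dinf_eucNorm_sub_le_one (ε := ε) hm hp
    (((p : ℝ) ^ K)⁻¹ • x)
  refine ⟨(p : ℝ) ^ K • w, fun s hs => ⟨?_, ?_⟩⟩
  · rw [add_comm]
    exact ⟨K + k, by omega, (hK s hs).add_pow_smul hw⟩
  · have hx : (p : ℝ) ^ K • w + s - x = (p : ℝ) ^ K • (w - ((p : ℝ) ^ K)⁻¹ • x) + s := by
      rw [smul_sub, smul_smul, mul_inv_cancel₀ (pow_ne_zero _ hp0), one_smul]; abel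
    calc eucNorm ((p : ℝ) ^ K • w + s - x)
        ≤ |(p : ℝ)| ^ K * eucNorm (w - ((p : ℝ) ^ K)⁻¹ • x) + eucNorm s := by
          rw [hx, ← abs_pow, ← eucNorm_smul]; exact eucNorm_add_le _ _
      _ ≤ |(p : ℝ)| ^ K * 1 + B := by gcongr; exact hB _ (Set.mem_image_of_mem _ hs)
      _ = |(p : ℝ)| ^ K + B := by rw [mul_one]
end
end

section
/- If ε is a rational number, then for every c > 0 the set of difference vectors { d − d' : d, d' ∈ D_{ε,∞}, ‖d − d'‖ ≤ c } is finite; consequently the tiling T_ε + D_{ε,∞} has the local finiteness property. -/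
/-! If ε = a/n is rational, every digit, hence every point of D_{ε,∞} and every difference of two
such points, lies in the lattice (1/n)ℤ × ℤ, which has only finitely many points in any ball. -/

noncomputable section

open AddSubgroup

def fracLattice (n : ℕ) : AddSubgroup (ℝ × ℝ) :=
  (zmultiples (n : ℝ)⁻¹).prod (zmultiples 1)

lemma intCast_mem_zmultiples_inv_natCast {n : ℕ} (hn : n ≠ 0) (i : ℤ) :
    (i : ℝ) ∈ zmultiples (n : ℝ)⁻¹ :=
  ⟨i * n, by simp [hn]⟩

lemma ratCast_mem_zmultiples_inv_den (q : ℚ) : (q : ℝ) ∈ zmultiples (q.den : ℝ)⁻¹ :=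
  ⟨q.num, by simp [Rat.cast_def, div_eq_mul_inv]⟩

lemma bshift_mem_zmultiples_inv_den (q : ℚ) (j : ℤ) :
    bshift q j ∈ zmultiples (q.den : ℝ)⁻¹ := by
  unfold bshift
  split_ifs
  exacts [ratCast_mem_zmultiples_inv_den q, zero_mem _]

lemma Ddig_subset_fracLattice (m : ℕ) (q : ℚ) : Ddig m q ⊆ fracLattice q.den := by
  rintro _ ⟨i, j, -, -, rfl⟩
  exact mem_prod.2 ⟨add_mem (intCast_mem_zmultiples_inv_natCast q.den_nz i)
    (bshift_mem_zmultiples_inv_den q j), intCast_mem_zmultiples_one j⟩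

lemma Dinf_subset_of_Ddig_subset (p : ℤ) {m : ℕ} {ε : ℝ} {H : AddSubgroup (ℝ × ℝ)}
    (h : Ddig m ε ⊆ H) : Dinf p m ε ⊆ H := by
  rintro _ ⟨k, -, d, hd, rfl⟩
  refine sum_mem fun l hl => ?_
  have : (p : ℝ) ^ l • d l = (p ^ l) • d l := by
    rw [← Int.cast_pow, Int.cast_smul_eq_zsmul]
  exact this ▸ zsmul_mem (h (hd l (Finset.mem_range.1 hl))) _

lemma abs_fst_le_eucNorm (v : ℝ × ℝ) : |v.1| ≤ eucNorm v :=
  Real.abs_le_sqrt (le_add_of_nonneg_right (sq_nonneg _))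

lemma abs_snd_le_eucNorm (v : ℝ × ℝ) : |v.2| ≤ eucNorm v :=
  Real.abs_le_sqrt (le_add_of_nonneg_left (sq_nonneg _))

lemma finite_setOf_mem_zmultiples_abs_le {a : ℝ} (ha : a ≠ 0) (c : ℝ) :
    {x | x ∈ zmultiples a ∧ |x| ≤ c}.Finite := by
  set N := ⌈c / |a|⌉
  refine ((Set.finite_Icc (-N) N).image (· • a)).subset ?_
  rintro _ ⟨⟨k, rfl⟩, hk⟩
  refine ⟨k, abs_le.1 ?_, rfl⟩
  have : (|k| : ℝ) ≤ c / |a| := by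
    rw [le_div_iff₀ (abs_pos.2 ha), ← abs_mul, ← zsmul_eq_mul]
    exact hk
  exact_mod_cast this.trans (Int.le_ceil _)

lemma finite_setOf_mem_fracLattice_eucNorm_le {n : ℕ} (hn : n ≠ 0) (c : ℝ) :
    {v | v ∈ fracLattice n ∧ eucNorm v ≤ c}.Finite := by
  refine ((finite_setOf_mem_zmultiples_abs_le (inv_ne_zero (Nat.cast_ne_zero.2 hn)) c).prod
    (finite_setOf_mem_zmultiples_abs_le one_ne_zero c)).subset ?_
  rintro v ⟨hv, hc⟩
  exact ⟨⟨(mem_prod.1 hv).1, (abs_fst_le_eucNorm v).trans hc⟩,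
    ⟨(mem_prod.1 hv).2, (abs_snd_le_eucNorm v).trans hc⟩⟩

theorem stmt16_general (p : ℤ) (m : ℕ) (ε : ℝ)
    (hε : ∃ q : ℚ, ε = (q : ℝ)) :
    ∀ c : ℝ, 0 < c →
      {v : ℝ × ℝ | ∃ d ∈ Dinf p m ε, ∃ d' ∈ Dinf p m ε,
          v = d - d' ∧ eucNorm v ≤ c}.Finite := by
  obtain ⟨q, rfl⟩ := hε
  intro c _
  have hD := Dinf_subset_of_Ddig_subset p (Ddig_subset_fracLattice m q)
  refine (finite_setOf_mem_fracLattice_eucNorm_le q.den_nz c).subset ?_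
  rintro _ ⟨d, hd, d', hd', rfl, hc⟩
  exact ⟨sub_mem (hD hd) (hD hd'), hc⟩

/-- if `ε` is rational then for every `c > 0` the set of difference vectors
of `D_{ε,∞}` of Euclidean norm at most `c` is finite (local finiteness property). -/
theorem stmt16 (p : ℤ) (m : ℕ) (hm : 1 ≤ m) (hp : |p| = 2 * (m : ℤ) + 1) (ε : ℝ)
    (hε : ∃ q : ℚ, ε = (q : ℝ)) :
    ∀ c : ℝ, 0 < c →
      {v : ℝ × ℝ | ∃ d ∈ Dinf p m ε, ∃ d' ∈ Dinf p m ε,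
          v = d - d' ∧ eucNorm v ≤ c}.Finite :=
  stmt16_general p m ε hε
end
end
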